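/- Let Ω, Ω' ⊆ ℝ^q be open, let χ : Ω' → Ω be a C^∞-diffeomorphism, fix δ ∈ (0,1), and let a_j : Ω → End(ℂ^{M_j}) (j = 1,2) be smooth such that both a_j and χ*a_j := a_j ∘ χ admit δ-admissible decompositions. If p ∈ S^μ_{1,δ}(Ω×ℝ^q;(ℂ^{M₁},a₁),(ℂ^{M₂},a₂)) is elliptic, then the pullback symbol (y',η') ↦ p(χ(y'), (d_{χ(y')}χ^{−1})^T η') is an elliptic element of S^μ_{1,δ}(Ω'×ℝ^q;(ℂ^{M₁},χ*a₁),(ℂ^{M₂},χ*a₂)). -/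

import Mathlib

open Set Metric
noncomputable section

abbrev Vec (q : ℕ) := EuclideanSpace ℝ (Fin q)
abbrev CVec (M : ℕ) := EuclideanSpace ℂ (Fin M)
abbrev Hom' (M₁ M₂ : ℕ) := CVec M₁ →L[ℂ] CVec M₂
abbrev End' (M : ℕ) := Hom' M M

/-- `ϱ^a := exp((log ϱ)·a)`. -/
def rpowEnd {M : ℕ} (ϱ : ℝ) (a : End' M) : End' M :=
  NormedSpace.exp ((Real.log ϱ : ℂ) • a)

/-- `⟨η⟩ = (1+|η|²)^{1/2}`. -/
def jbr {q : ℕ} (η : Vec q) : ℝ := Real.sqrt (1 + ‖η‖ ^ 2)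

/-- Iterated partial derivatives in the second (covariable) slot. -/
def pdSnd {q : ℕ} {F : Type*} [NormedAddCommGroup F] [NormedSpace ℝ F]
    (β : List (Fin q)) (f : Vec q → Vec q → F) : Vec q → Vec q → F :=
  β.foldr (fun i g => fun y η => fderiv ℝ (g y) η (EuclideanSpace.single i (1:ℝ))) f

/-- Iterated partial derivatives in the first (base variable) slot. -/
def pdFst {q : ℕ} {F : Type*} [NormedAddCommGroup F] [NormedSpace ℝ F]
    (α : List (Fin q)) (f : Vec q → Vec q → F) : Vec q → Vec q → F :=
  α.foldr (fun i g => fun y η => fderiv ℝ (fun y' => g y' η) y (EuclideanSpace.single i (1:ℝ))) f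

/-- The twisted symbol class `S^μ_{1,δ}(Ω×ℝ^q;(ℂ^{M₁},a₁),(ℂ^{M₂},a₂))`. -/
def TwistedSymbol {q M₁ M₂ : ℕ} (Ω : Set (Vec q)) (δ μ : ℝ)
    (a₁ : Vec q → End' M₁) (a₂ : Vec q → End' M₂)
    (p : Vec q → Vec q → Hom' M₁ M₂) : Prop :=
  ContDiffOn ℝ (⊤ : ℕ∞) (fun z : Vec q × Vec q => p z.1 z.2) (Ω ×ˢ (univ : Set (Vec q))) ∧
  ∀ K : Set (Vec q), K ⊆ Ω → IsCompact K → ∀ α β : List (Fin q),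
    ∃ C > 0, ∀ y ∈ K, ∀ η : Vec q,
      ‖(rpowEnd (jbr η) (a₂ y)).comp
          ((pdFst α (pdSnd β p) y η).comp (rpowEnd (jbr η) (-(a₁ y))))‖
        ≤ C * jbr η ^ (μ - (β.length : ℝ) + δ * (α.length : ℝ))

/-- Spectrum of the restriction of `f` to an invariant subspace `V`. -/
def specRes {M : ℕ} (f : End' M) (V : Submodule ℂ (CVec M))
    (h : ∀ x ∈ V, f x ∈ V) : Set ℂ :=
  spectrum ℂ ((f : CVec M →ₗ[ℂ] CVec M).restrict h)

/-- `a` admits a `δ`-admissible decomposition on `Ω`. -/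
def AdmissibleDecomp {q M : ℕ} (Ω : Set (Vec q)) (δ : ℝ)
    (a : Vec q → End' M) : Prop :=
  ∃ (N : ℕ) (V : Fin N → Submodule ℂ (CVec M)),
    DirectSum.IsInternal V ∧
    ∃ hinv : ∀ k, ∀ y ∈ Ω, ∀ x ∈ V k, a y x ∈ V k,
      (∀ k, Metric.diam
          (closure (⋃ y, ⋃ hy : y ∈ Ω, specRes (a y) (V k) (hinv k y hy))) < δ) ∧
      Pairwise (fun k l => Disjoint
          (closure (⋃ y, ⋃ hy : y ∈ Ω, specRes (a y) (V k) (hinv k y hy)))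
          (closure (⋃ y, ⋃ hy : y ∈ Ω, specRes (a y) (V l) (hinv l y hy))))

/-- Ellipticity of a twisted symbol: invertibility for large `|η|` locally uniformly,
with the twisted bound `‖⟨η⟩^{a₁(y)} p(y,η)⁻¹ ⟨η⟩^{-a₂(y)}‖ ≤ C⟨η⟩^{-μ}`. -/
def IsElliptic {q M₁ M₂ : ℕ} (Ω : Set (Vec q)) (μ : ℝ)
    (a₁ : Vec q → End' M₁) (a₂ : Vec q → End' M₂)
    (p : Vec q → Vec q → Hom' M₁ M₂) : Prop :=
  ∀ K : Set (Vec q), K ⊆ Ω → IsCompact K →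
    ∃ R > (0:ℝ), ∃ C > (0:ℝ), ∃ pinv : Vec q → Vec q → Hom' M₂ M₁,
      ∀ y ∈ K, ∀ η : Vec q, R ≤ ‖η‖ →
        (p y η).comp (pinv y η) = ContinuousLinearMap.id ℂ (CVec M₂) ∧
        (pinv y η).comp (p y η) = ContinuousLinearMap.id ℂ (CVec M₁) ∧
        ‖(rpowEnd (jbr η) (a₁ y)).comp
            ((pinv y η).comp (rpowEnd (jbr η) (-(a₂ y))))‖ ≤ C * jbr η ^ (-μ)

section Helpers

open Real

lemma one_le_jbr {q : ℕ} (η : Vec q) : 1 ≤ jbr η := by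
  rw [jbr]
  calc (1:ℝ) = Real.sqrt 1 := by simp
  _ ≤ Real.sqrt (1 + ‖η‖^2) := Real.sqrt_le_sqrt (by nlinarith [sq_nonneg ‖η‖])

lemma jbr_pos {q : ℕ} (η : Vec q) : 0 < jbr η := lt_of_lt_of_le one_pos (one_le_jbr η)

lemma norm_le_jbr {q : ℕ} (η : Vec q) : ‖η‖ ≤ jbr η := by
  rw [jbr]
  nlinarith [Real.sq_sqrt (show (0:ℝ) ≤ 1 + ‖η‖^2 by positivity),
    Real.sqrt_nonneg (1 + ‖η‖^2), norm_nonneg η]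

lemma jbr_le_jbr {q : ℕ} {c : ℝ} (hc : 1 ≤ c) {η ζ : Vec q} (h : ‖η‖ ≤ c * ‖ζ‖) :
    jbr η ≤ c * jbr ζ := by
  rw [jbr, jbr, show c * Real.sqrt (1 + ‖ζ‖^2) = Real.sqrt (c^2 * (1 + ‖ζ‖^2)) by
    rw [Real.sqrt_mul (by positivity), Real.sqrt_sq (by linarith)]]
  apply Real.sqrt_le_sqrt
  nlinarith [norm_nonneg η, norm_nonneg ζ]

lemma jbr_rpow_le {q : ℕ} {c : ℝ} (hc : 1 ≤ c) {η ζ : Vec q}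
    (h1 : jbr η ≤ c * jbr ζ) (h2 : jbr ζ ≤ c * jbr η) (s : ℝ) :
    jbr η ^ s ≤ c ^ |s| * jbr ζ ^ s := by
  have hζ := jbr_pos ζ; have hη := jbr_pos η
  have hc0 : (0:ℝ) < c := by linarith
  rcases le_or_gt 0 s with hs | hs
  · rw [abs_of_nonneg hs, ← Real.mul_rpow (le_of_lt hc0) (le_of_lt hζ)]
    exact Real.rpow_le_rpow (le_of_lt hη) h1 hs
  · rw [abs_of_neg hs]
    have h3 : jbr ζ / c ≤ jbr η := (div_le_iff₀ hc0).2 (by linarith [h2])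
    have h4 : jbr η ^ s ≤ (jbr ζ / c) ^ s :=
      Real.rpow_le_rpow_of_nonpos (div_pos hζ hc0) h3 (le_of_lt hs)
    calc jbr η ^ s ≤ (jbr ζ / c) ^ s := h4
    _ = c ^ (-s) * jbr ζ ^ s := by
        rw [Real.div_rpow (le_of_lt hζ) (le_of_lt hc0), Real.rpow_neg (le_of_lt hc0)]
        rw [div_eq_mul_inv, mul_comm]
    _ = c ^ (-s) * jbr ζ ^ s := rfl

lemma jbr_rpow_mono {q : ℕ} (η : Vec q) {e e' : ℝ} (h : e ≤ e') :
    jbr η ^ e ≤ jbr η ^ e' :=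
  Real.rpow_le_rpow_of_exponent_le (one_le_jbr η) h

lemma norm_exp_le {M : ℕ} (x : End' M) :
    ‖NormedSpace.exp x‖ ≤ Real.exp ‖x‖ := by
  rw [NormedSpace.exp_eq_tsum ℂ]
  have hsum := NormedSpace.norm_expSeries_summable' (𝕂 := ℂ) x
  refine (norm_tsum_le_tsum_norm hsum).trans ?_
  rw [Real.exp_eq_exp_ℝ, NormedSpace.exp_eq_tsum ℝ]
  have hs2 : Summable fun n : ℕ => ((n.factorial : ℝ))⁻¹ • ‖x‖ ^ n := by
    refine Summable.congr (Real.summable_pow_div_factorial ‖x‖) (fun n => ?_)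
    rw [smul_eq_mul, div_eq_inv_mul]
  refine Summable.tsum_le_tsum (fun n => ?_) hsum hs2
  have h1 : ‖x ^ n‖ ≤ ‖x‖ ^ n := by
    cases n with
    | zero =>
        rw [pow_zero, pow_zero, ContinuousLinearMap.one_def]
        exact ContinuousLinearMap.norm_id_le
    | succ m => exact norm_pow_le' x (Nat.succ_pos m)
  calc ‖((n.factorial : ℂ))⁻¹ • x ^ n‖ = ((n.factorial : ℝ))⁻¹ * ‖x ^ n‖ := by
        rw [norm_smul ((n.factorial : ℂ))⁻¹ (x ^ n), norm_inv, Complex.norm_natCast]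
  _ ≤ ((n.factorial : ℝ))⁻¹ * ‖x‖ ^ n := by gcongr
  _ = ((n.factorial : ℝ))⁻¹ • ‖x‖ ^ n := by rw [smul_eq_mul]

end Helpers

section RpowEnd

lemma rpowEnd_comp_rpowEnd_neg {M : ℕ} (ϱ σ : ℝ) (a : End' M) :
    (rpowEnd ϱ a).comp (rpowEnd σ (-a)) =
      NormedSpace.exp (((Real.log ϱ - Real.log σ : ℝ) : ℂ) • a) := by
  rw [← ContinuousLinearMap.mul_def, rpowEnd, rpowEnd, smul_neg, ← neg_smul,
    ← NormedSpace.exp_add_of_commute_of_mem_ball (𝕂 := ℂ) (Commute.smul_left (Commute.smul_right (Commute.refl a) _) _) (by simp [NormedSpace.expSeries_radius_eq_top]) (by simp [NormedSpace.expSeries_radius_eq_top]),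
    ]
  congr 1
  push_cast
  module

lemma rpowEnd_neg_comp_rpowEnd {M : ℕ} (ϱ : ℝ) (a : End' M) :
    (rpowEnd ϱ (-a)).comp (rpowEnd ϱ a) = ContinuousLinearMap.id ℂ (CVec M) := by
  have h := rpowEnd_comp_rpowEnd_neg ϱ ϱ (-a)
  rw [neg_neg] at h
  rw [h]
  rw [show ((Real.log ϱ - Real.log ϱ : ℝ) : ℂ) • (-a) = (0 : End' M) by push_cast; module]
  rw [NormedSpace.exp_zero, ContinuousLinearMap.one_def]

lemma rpowEnd_comp_rpowEnd_neg_self {M : ℕ} (ϱ : ℝ) (a : End' M) :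
    (rpowEnd ϱ a).comp (rpowEnd ϱ (-a)) = ContinuousLinearMap.id ℂ (CVec M) := by
  rw [rpowEnd_comp_rpowEnd_neg]
  rw [show ((Real.log ϱ - Real.log ϱ : ℝ) : ℂ) • a = (0 : End' M) by push_cast; module]
  rw [NormedSpace.exp_zero, ContinuousLinearMap.one_def]

lemma norm_rpowEnd_comp_rpowEnd_neg_le {M : ℕ} (ϱ σ : ℝ) (a : End' M) :
    ‖(rpowEnd ϱ a).comp (rpowEnd σ (-a))‖ ≤
      Real.exp (|Real.log ϱ - Real.log σ| * ‖a‖) := by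
  rw [rpowEnd_comp_rpowEnd_neg]
  refine (norm_exp_le _).trans ?_
  rw [norm_smul ((Real.log ϱ - Real.log σ : ℝ) : ℂ) a, Complex.norm_real, Real.norm_eq_abs]

end RpowEnd

section PartialDerivs

variable {q : ℕ} {F : Type*} [NormedAddCommGroup F] [NormedSpace ℝ F]

/-- single basis vector -/
def sgl {q : ℕ} (i : Fin q) : Vec q := EuclideanSpace.single i (1:ℝ)

/-- one partial derivative in the first slot -/
def D1 (i : Fin q) (f : Vec q → Vec q → F) : Vec q → Vec q → F :=
  fun y η => fderiv ℝ (fun y' => f y' η) y (sgl i)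

/-- one partial derivative in the second slot -/
def D2 (i : Fin q) (f : Vec q → Vec q → F) : Vec q → Vec q → F :=
  fun y η => fderiv ℝ (f y) η (sgl i)

lemma pdFst_cons (i : Fin q) (α : List (Fin q)) (f : Vec q → Vec q → F) :
    pdFst (i :: α) f = D1 i (pdFst α f) := rfl

lemma pdSnd_cons (i : Fin q) (β : List (Fin q)) (f : Vec q → Vec q → F) :
    pdSnd (i :: β) f = D2 i (pdSnd β f) := rfl

lemma pdFst_nil (f : Vec q → Vec q → F) : pdFst [] f = f := rfl
lemma pdSnd_nil (f : Vec q → Vec q → F) : pdSnd [] f = f := rfl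

lemma euclid_decomp (w : Vec q) : ∑ j : Fin q, w j • sgl j = w := by
  ext j'
  rw [WithLp.ofLp_sum, Fintype.sum_apply]
  simp [sgl, EuclideanSpace.single_apply]

/-- slice of a differentiable function in the first variable -/
lemma hasFDerivAt_slice_fst {f : Vec q → Vec q → F} {z : Vec q × Vec q}
    (h : DifferentiableAt ℝ (fun z : Vec q × Vec q => f z.1 z.2) z) :
    HasFDerivAt (fun y => f y z.2)
      ((fderiv ℝ (fun z : Vec q × Vec q => f z.1 z.2) z).comp
        ((ContinuousLinearMap.id ℝ (Vec q)).prod 0)) z.1 := by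
  have h1 : HasFDerivAt (fun y : Vec q => (y, z.2))
      ((ContinuousLinearMap.id ℝ (Vec q)).prod 0) z.1 :=
    (hasFDerivAt_id _).prodMk (hasFDerivAt_const _ _)
  exact h.hasFDerivAt.comp z.1 h1

lemma hasFDerivAt_slice_snd {f : Vec q → Vec q → F} {z : Vec q × Vec q}
    (h : DifferentiableAt ℝ (fun z : Vec q × Vec q => f z.1 z.2) z) :
    HasFDerivAt (fun η => f z.1 η)
      ((fderiv ℝ (fun z : Vec q × Vec q => f z.1 z.2) z).comp
        ((0 : Vec q →L[ℝ] Vec q).prod (ContinuousLinearMap.id ℝ (Vec q)))) z.2 := by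
  have h1 : HasFDerivAt (fun η : Vec q => (z.1, η))
      ((0 : Vec q →L[ℝ] Vec q).prod (ContinuousLinearMap.id ℝ (Vec q))) z.2 :=
    (hasFDerivAt_const _ _).prodMk (hasFDerivAt_id _)
  exact h.hasFDerivAt.comp z.2 h1

lemma pd1_eq {f : Vec q → Vec q → F} {z : Vec q × Vec q}
    (h : DifferentiableAt ℝ (fun z : Vec q × Vec q => f z.1 z.2) z) (v : Vec q) :
    fderiv ℝ (fun y => f y z.2) z.1 v =
      fderiv ℝ (fun z : Vec q × Vec q => f z.1 z.2) z (v, 0) := by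
  rw [(hasFDerivAt_slice_fst h).fderiv]
  simp

lemma pd2_eq {f : Vec q → Vec q → F} {z : Vec q × Vec q}
    (h : DifferentiableAt ℝ (fun z : Vec q × Vec q => f z.1 z.2) z) (v : Vec q) :
    fderiv ℝ (fun η => f z.1 η) z.2 v =
      fderiv ℝ (fun z : Vec q × Vec q => f z.1 z.2) z (0, v) := by
  rw [(hasFDerivAt_slice_snd h).fderiv]
  simp

variable {U : Set (Vec q × Vec q)}

lemma diffAt_of_smoothU {f : Vec q → Vec q → F}
    (hf : ContDiffOn ℝ (⊤ : ℕ∞) (fun z : Vec q × Vec q => f z.1 z.2) U) (hU : IsOpen U)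
    {z : Vec q × Vec q} (hz : z ∈ U) :
    DifferentiableAt ℝ (fun z : Vec q × Vec q => f z.1 z.2) z :=
  (hf.differentiableOn (by simp)).differentiableAt (hU.mem_nhds hz)

lemma smoothU_fderiv {f : Vec q → Vec q → F}
    (hf : ContDiffOn ℝ (⊤ : ℕ∞) (fun z : Vec q × Vec q => f z.1 z.2) U) (hU : IsOpen U) :
    ContDiffOn ℝ (⊤ : ℕ∞) (fun z => fderiv ℝ (fun z : Vec q × Vec q => f z.1 z.2) z) U :=
  hf.fderiv_of_isOpen hU (by simp)

lemma smoothU_D1 {f : Vec q → Vec q → F}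
    (hf : ContDiffOn ℝ (⊤ : ℕ∞) (fun z : Vec q × Vec q => f z.1 z.2) U) (hU : IsOpen U) (i : Fin q) :
    ContDiffOn ℝ (⊤ : ℕ∞) (fun z : Vec q × Vec q => D1 i f z.1 z.2) U := by
  refine (((smoothU_fderiv hf hU).clm_apply
      (contDiffOn_const (c := ((sgl i : Vec q), (0 : Vec q)))))).congr ?_
  intro z hz
  exact pd1_eq (diffAt_of_smoothU hf hU hz) (sgl i)

lemma smoothU_D2 {f : Vec q → Vec q → F}
    (hf : ContDiffOn ℝ (⊤ : ℕ∞) (fun z : Vec q × Vec q => f z.1 z.2) U) (hU : IsOpen U) (i : Fin q) :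
    ContDiffOn ℝ (⊤ : ℕ∞) (fun z : Vec q × Vec q => D2 i f z.1 z.2) U := by
  refine (((smoothU_fderiv hf hU).clm_apply
      (contDiffOn_const (c := ((0 : Vec q), (sgl i : Vec q)))))).congr ?_
  intro z hz
  exact pd2_eq (diffAt_of_smoothU hf hU hz) (sgl i)

lemma smoothU_pdSnd {f : Vec q → Vec q → F}
    (hf : ContDiffOn ℝ (⊤ : ℕ∞) (fun z : Vec q × Vec q => f z.1 z.2) U) (hU : IsOpen U)
    (β : List (Fin q)) :
    ContDiffOn ℝ (⊤ : ℕ∞) (fun z : Vec q × Vec q => pdSnd β f z.1 z.2) U := by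
  induction β with
  | nil => exact hf
  | cons k β ih => rw [pdSnd_cons]; exact smoothU_D2 ih hU k

lemma smoothU_pdFst {f : Vec q → Vec q → F}
    (hf : ContDiffOn ℝ (⊤ : ℕ∞) (fun z : Vec q × Vec q => f z.1 z.2) U) (hU : IsOpen U)
    (α : List (Fin q)) :
    ContDiffOn ℝ (⊤ : ℕ∞) (fun z : Vec q × Vec q => pdFst α f z.1 z.2) U := by
  induction α with
  | nil => exact hf
  | cons i α ih => rw [pdFst_cons]; exact smoothU_D1 ih hU i

lemma smoothU_pd {f : Vec q → Vec q → F}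
    (hf : ContDiffOn ℝ (⊤ : ℕ∞) (fun z : Vec q × Vec q => f z.1 z.2) U) (hU : IsOpen U)
    (α β : List (Fin q)) :
    ContDiffOn ℝ (⊤ : ℕ∞) (fun z : Vec q × Vec q => pdFst α (pdSnd β f) z.1 z.2) U :=
  smoothU_pdFst (smoothU_pdSnd hf hU β) hU α

end PartialDerivs

section CommCongr

variable {q : ℕ} {F : Type*} [NormedAddCommGroup F] [NormedSpace ℝ F]
variable {U : Set (Vec q × Vec q)}

lemma slice_fst_open (hU : IsOpen U) (η : Vec q) : IsOpen {y' : Vec q | (y', η) ∈ U} :=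
  hU.preimage (continuous_id.prodMk continuous_const)

lemma slice_snd_open (hU : IsOpen U) (y : Vec q) : IsOpen {η' : Vec q | (y, η') ∈ U} :=
  hU.preimage (continuous_const.prodMk continuous_id)

lemma D1_congrU (hU : IsOpen U) {f g : Vec q → Vec q → F}
    (h : ∀ y η, (y, η) ∈ U → f y η = g y η) (i : Fin q) :
    ∀ y η, (y, η) ∈ U → D1 i f y η = D1 i g y η := by
  intro y η hyη
  have hev : (fun y' => f y' η) =ᶠ[nhds y] (fun y' => g y' η) :=
    Filter.eventuallyEq_of_mem ((slice_fst_open hU η).mem_nhds hyη)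
      (fun y' hy' => h y' η hy')
  unfold D1
  rw [hev.fderiv_eq]

lemma D2_congrU (hU : IsOpen U) {f g : Vec q → Vec q → F}
    (h : ∀ y η, (y, η) ∈ U → f y η = g y η) (k : Fin q) :
    ∀ y η, (y, η) ∈ U → D2 k f y η = D2 k g y η := by
  intro y η hyη
  have hev : (f y) =ᶠ[nhds η] (g y) :=
    Filter.eventuallyEq_of_mem ((slice_snd_open hU y).mem_nhds hyη)
      (fun η' hη' => h y η' hη')
  unfold D2
  rw [hev.fderiv_eq]

lemma D1_D2_comm {f : Vec q → Vec q → F}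
    (hf : ContDiffOn ℝ (⊤ : ℕ∞) (fun z : Vec q × Vec q => f z.1 z.2) U) (hU : IsOpen U)
    (i k : Fin q) {y η : Vec q} (hz : (y, η) ∈ U) :
    D1 i (D2 k f) y η = D2 k (D1 i f) y η := by
  have hg : ContDiffOn ℝ (⊤ : ℕ∞)
      (fun z => fderiv ℝ (fun z : Vec q × Vec q => f z.1 z.2) z) U := smoothU_fderiv hf hU
  set g := fun z => fderiv ℝ (fun z : Vec q × Vec q => f z.1 z.2) z with hgdef
  have hgz : DifferentiableAt ℝ g (y, η) :=
    (hg.differentiableOn (by simp)).differentiableAt (hU.mem_nhds hz)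
  set f'' := fderiv ℝ g (y, η) with hf''def
  have hev : ∀ᶠ w in nhds (y, η), HasFDerivAt (fun z : Vec q × Vec q => f z.1 z.2) (g w) w := by
    filter_upwards [hU.mem_nhds hz] with w hw
    exact (diffAt_of_smoothU hf hU hw).hasFDerivAt
  have hsymm : ∀ v w, f'' v w = f'' w v := fun v w =>
    second_derivative_symmetric_of_eventually hev hgz.hasFDerivAt v w
  -- first-slot slice derivative of evaluated g
  have key1 : ∀ w0 : Vec q × Vec q, ∀ v : Vec q,
      fderiv ℝ (fun y' => g (y', η) w0) y v = f'' (v, 0) w0 := by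
    intro w0 v
    have happ : HasFDerivAt (fun z : Vec q × Vec q => g z w0)
        ((ContinuousLinearMap.apply ℝ F w0).comp f'') (y, η) :=
      ((ContinuousLinearMap.apply ℝ F w0).hasFDerivAt).comp _ hgz.hasFDerivAt
    have hA : HasFDerivAt (fun y' : Vec q => (y', η))
        ((ContinuousLinearMap.id ℝ (Vec q)).prod 0) y :=
      (hasFDerivAt_id _).prodMk (hasFDerivAt_const _ _)
    have hcomp : HasFDerivAt (fun y' : Vec q => g (y', η) w0)
        (((ContinuousLinearMap.apply ℝ F w0).comp f'').comp
          ((ContinuousLinearMap.id ℝ (Vec q)).prod 0)) y := by have := happ.comp y hA; exact this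
    rw [hcomp.fderiv]
    simp
  have key2 : ∀ w0 : Vec q × Vec q, ∀ v : Vec q,
      fderiv ℝ (fun η' => g (y, η') w0) η v = f'' (0, v) w0 := by
    intro w0 v
    have happ : HasFDerivAt (fun z : Vec q × Vec q => g z w0)
        ((ContinuousLinearMap.apply ℝ F w0).comp f'') (y, η) :=
      ((ContinuousLinearMap.apply ℝ F w0).hasFDerivAt).comp _ hgz.hasFDerivAt
    have hA : HasFDerivAt (fun η' : Vec q => (y, η'))
        ((0 : Vec q →L[ℝ] Vec q).prod (ContinuousLinearMap.id ℝ (Vec q))) η :=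
      (hasFDerivAt_const _ _).prodMk (hasFDerivAt_id _)
    have hcomp : HasFDerivAt (fun η' : Vec q => g (y, η') w0)
        (((ContinuousLinearMap.apply ℝ F w0).comp f'').comp
          ((0 : Vec q →L[ℝ] Vec q).prod (ContinuousLinearMap.id ℝ (Vec q)))) η := by have := happ.comp η hA; exact this
    rw [hcomp.fderiv]
    simp
  -- LHS
  have hevL : (fun y' => D2 k f y' η) =ᶠ[nhds y] (fun y' => g (y', η) (0, sgl k)) := by
    refine Filter.eventuallyEq_of_mem ((slice_fst_open hU η).mem_nhds hz) (fun y' hy' => ?_)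
    exact pd2_eq (z := (y', η)) (diffAt_of_smoothU hf hU hy') (sgl k)
  have hevR : (fun η' => D1 i f y η') =ᶠ[nhds η] (fun η' => g (y, η') (sgl i, 0)) := by
    refine Filter.eventuallyEq_of_mem ((slice_snd_open hU y).mem_nhds hz) (fun η' hη' => ?_)
    exact pd1_eq (z := (y, η')) (diffAt_of_smoothU hf hU hη') (sgl i)
  have hL : D1 i (D2 k f) y η = f'' (sgl i, 0) (0, sgl k) := by
    show fderiv ℝ (fun y' => D2 k f y' η) y (sgl i) = _
    rw [hevL.fderiv_eq]
    exact key1 _ _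
  have hR : D2 k (D1 i f) y η = f'' (0, sgl k) (sgl i, 0) := by
    show fderiv ℝ (fun η' => D1 i f y η') η (sgl k) = _
    rw [hevR.fderiv_eq]
    exact key2 _ _
  rw [hL, hR, hsymm]

lemma pdFst_D2_swap {f : Vec q → Vec q → F}
    (hf : ContDiffOn ℝ (⊤ : ℕ∞) (fun z : Vec q × Vec q => f z.1 z.2) U) (hU : IsOpen U)
    (α : List (Fin q)) (k : Fin q) :
    ∀ y η, (y, η) ∈ U → pdFst α (D2 k f) y η = D2 k (pdFst α f) y η := by
  induction α with
  | nil => intro y η _; rfl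
  | cons i α ih =>
    intro y η hyη
    rw [pdFst_cons, pdFst_cons]
    have h1 := D1_congrU hU ih i y η hyη
    rw [h1]
    exact D1_D2_comm (smoothU_pdFst hf hU α) hU i k hyη

lemma pd_swap_cons {f : Vec q → Vec q → F}
    (hf : ContDiffOn ℝ (⊤ : ℕ∞) (fun z : Vec q × Vec q => f z.1 z.2) U) (hU : IsOpen U)
    (α β : List (Fin q)) (k : Fin q) :
    ∀ y η, (y, η) ∈ U →
      D2 k (pdFst α (pdSnd β f)) y η = pdFst α (pdSnd (k :: β) f) y η := by
  intro y η hyη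
  rw [pdSnd_cons]
  exact (pdFst_D2_swap (smoothU_pdSnd hf hU β) hU α k y η hyη).symm

end CommCongr

section RepDef

/-- Structural representation class for derivatives of a pulled-back symbol. -/
inductive SymbRep {q M₁ M₂ : ℕ} (Ω' : Set (Vec q)) (χ : Vec q → Vec q)
    (Af : Vec q → (Vec q →L[ℝ] Vec q)) (p : Vec q → Vec q → Hom' M₁ M₂)
    (μ δ : ℝ) : ℝ → (Vec q → Vec q → Hom' M₁ M₂) → Prop
  | base (α β : List (Fin q)) (e : ℝ)
      (h : μ - (β.length : ℝ) + δ * (α.length : ℝ) ≤ e) :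
      SymbRep Ω' χ Af p μ δ e (fun y' η' => pdFst α (pdSnd β p) (χ y') (Af y' η'))
  | smul (m : Vec q → ℝ) (hm : ContDiffOn ℝ (⊤ : ℕ∞) m Ω') {e : ℝ}
      {f : Vec q → Vec q → Hom' M₁ M₂} (hf : SymbRep Ω' χ Af p μ δ e f) :
      SymbRep Ω' χ Af p μ δ e (fun y' η' => m y' • f y' η')
  | lin (L : Vec q → (Vec q →L[ℝ] ℝ)) (hL : ContDiffOn ℝ (⊤ : ℕ∞) L Ω') {e : ℝ}
      {f : Vec q → Vec q → Hom' M₁ M₂} (hf : SymbRep Ω' χ Af p μ δ e f) :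
      SymbRep Ω' χ Af p μ δ (e + 1) (fun y' η' => (L y' η') • f y' η')
  | add {e : ℝ} {f g : Vec q → Vec q → Hom' M₁ M₂}
      (hf : SymbRep Ω' χ Af p μ δ e f) (hg : SymbRep Ω' χ Af p μ δ e g) :
      SymbRep Ω' χ Af p μ δ e (fun y' η' => f y' η' + g y' η')
  | zero (e : ℝ) : SymbRep Ω' χ Af p μ δ e (fun _ _ => (0 : Hom' M₁ M₂))
  | mono {e e' : ℝ} {f : Vec q → Vec q → Hom' M₁ M₂}
      (hf : SymbRep Ω' χ Af p μ δ e f) (h : e ≤ e') : SymbRep Ω' χ Af p μ δ e' f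

variable {q M₁ M₂ : ℕ} {Ω Ω' : Set (Vec q)} {χ : Vec q → Vec q}
  {Af : Vec q → (Vec q →L[ℝ] Vec q)} {p : Vec q → Vec q → Hom' M₁ M₂} {μ δ : ℝ}

lemma rep_sum {ι : Type*} (s : Finset ι) (G : ι → Vec q → Vec q → Hom' M₁ M₂) {e : ℝ}
    (h : ∀ j ∈ s, SymbRep Ω' χ Af p μ δ e (G j)) :
    SymbRep Ω' χ Af p μ δ e (fun y' η' => ∑ j ∈ s, G j y' η') := by
  classical
  induction s using Finset.induction with
  | empty => simpa using SymbRep.zero e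
  | insert a s ha ih =>
    have : (fun y' η' => ∑ j ∈ insert a s, G j y' η') =
        (fun y' η' => G a y' η' + ∑ j ∈ s, G j y' η') := by
      funext y' η'; rw [Finset.sum_insert ha]
    rw [this]
    exact SymbRep.add (h a (Finset.mem_insert_self a s))
      (ih (fun j hj => h j (Finset.mem_insert_of_mem hj)))

lemma rep_smoothU (hΩ : IsOpen Ω) (hΩ' : IsOpen Ω')
    (hp1 : ContDiffOn ℝ (⊤ : ℕ∞) (fun z : Vec q × Vec q => p z.1 z.2) (Ω ×ˢ (univ : Set (Vec q))))
    (hχ : ContDiffOn ℝ (⊤ : ℕ∞) χ Ω') (hχm : Set.MapsTo χ Ω' Ω)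
    (hAf : ContDiffOn ℝ (⊤ : ℕ∞) Af Ω')
    {e : ℝ} {f : Vec q → Vec q → Hom' M₁ M₂} (hf : SymbRep Ω' χ Af p μ δ e f) :
    ContDiffOn ℝ (⊤ : ℕ∞) (fun z : Vec q × Vec q => f z.1 z.2) (Ω' ×ˢ (univ : Set (Vec q))) := by
  have hfst : ContDiffOn ℝ (⊤ : ℕ∞) (fun z : Vec q × Vec q => z.1) (Ω' ×ˢ (univ : Set (Vec q))) :=
    contDiff_fst.contDiffOn
  have hfstm : Set.MapsTo (fun z : Vec q × Vec q => z.1) (Ω' ×ˢ (univ : Set (Vec q))) Ω' :=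
    fun z hz => hz.1
  induction hf with
  | base α β e he =>
    have hG := smoothU_pd hp1 (hΩ.prod isOpen_univ) α β
    have hΦ : ContDiffOn ℝ (⊤ : ℕ∞) (fun z : Vec q × Vec q => (χ z.1, Af z.1 z.2))
        (Ω' ×ˢ (univ : Set (Vec q))) := by
      refine ContDiffOn.prodMk (hχ.comp hfst hfstm) ?_
      exact (hAf.comp hfst hfstm).clm_apply contDiff_snd.contDiffOn
    have hm : Set.MapsTo (fun z : Vec q × Vec q => (χ z.1, Af z.1 z.2))
        (Ω' ×ˢ (univ : Set (Vec q))) (Ω ×ˢ (univ : Set (Vec q))) :=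
      fun z hz => ⟨hχm hz.1, trivial⟩
    exact hG.comp hΦ hm
  | smul m hm hf ih => exact (hm.comp hfst hfstm).smul ih
  | lin L hL hf ih =>
    exact (((hL.comp hfst hfstm).clm_apply contDiff_snd.contDiffOn)).smul ih
  | add hf hg ih1 ih2 => exact ih1.add ih2
  | zero e => exact contDiffOn_const
  | mono hf h ih => exact ih

end RepDef

section Estimates

lemma abs_log_sub_log_le {x y c : ℝ} (hx : 0 < x) (hy : 0 < y) (hc : 1 ≤ c)
    (h1 : x ≤ c * y) (h2 : y ≤ c * x) : |Real.log x - Real.log y| ≤ Real.log c := by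
  have hc0 : (0:ℝ) < c := by linarith
  rw [abs_le]
  constructor
  · have h3 : Real.log y ≤ Real.log (c * x) := (Real.log_le_log_iff hy (by positivity)).2 h2
    rw [Real.log_mul (ne_of_gt hc0) (ne_of_gt hx)] at h3
    linarith
  · have h3 : Real.log x ≤ Real.log (c * y) := (Real.log_le_log_iff hx (by positivity)).2 h1
    rw [Real.log_mul (ne_of_gt hc0) (ne_of_gt hy)] at h3
    linarith

lemma smul_sandwich {M₁ M₂ : ℕ} (A : End' M₂) (B : End' M₁) (T : Hom' M₁ M₂) (r : ℝ) :
    A.comp ((r • T).comp B) = r • (A.comp (T.comp B)) := by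
  ext x
  simp [ContinuousLinearMap.comp_apply]

lemma add_sandwich {M₁ M₂ : ℕ} (A : End' M₂) (B : End' M₁) (T₁ T₂ : Hom' M₁ M₂) :
    A.comp ((T₁ + T₂).comp B) = A.comp (T₁.comp B) + A.comp (T₂.comp B) := by
  ext x
  simp [ContinuousLinearMap.comp_apply]

lemma zero_sandwich {M₁ M₂ : ℕ} (A : End' M₂) (B : End' M₁) :
    A.comp ((0 : Hom' M₁ M₂).comp B) = 0 := by
  ext x
  simp [ContinuousLinearMap.comp_apply]

lemma sandwich {M₁ M₂ : ℕ} (a₁ : End' M₁) (a₂ : End' M₂) (T : Hom' M₁ M₂) (ϱ σ : ℝ) :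
    (rpowEnd ϱ a₂).comp (T.comp (rpowEnd ϱ (-a₁))) =
      ((rpowEnd ϱ a₂).comp (rpowEnd σ (-a₂))).comp
        ((((rpowEnd σ a₂).comp (T.comp (rpowEnd σ (-a₁))))).comp
          ((rpowEnd σ a₁).comp (rpowEnd ϱ (-a₁)))) := by
  have h2 : ∀ v, rpowEnd σ (-a₂) (rpowEnd σ a₂ v) = v := by
    intro v
    have h := ContinuousLinearMap.ext_iff.1 (rpowEnd_neg_comp_rpowEnd σ a₂) v
    simpa [ContinuousLinearMap.comp_apply] using h
  have h1 : ∀ v, rpowEnd σ (-a₁) (rpowEnd σ a₁ v) = v := by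
    intro v
    have h := ContinuousLinearMap.ext_iff.1 (rpowEnd_neg_comp_rpowEnd σ a₁) v
    simpa [ContinuousLinearMap.comp_apply] using h
  ext x
  simp only [ContinuousLinearMap.comp_apply, h1, h2]

lemma rep_estimate {q M₁ M₂ : ℕ} {Ω Ω' : Set (Vec q)} {χ : Vec q → Vec q}
    {Af : Vec q → (Vec q →L[ℝ] Vec q)} {p : Vec q → Vec q → Hom' M₁ M₂} {μ δ : ℝ}
    {a₁ : Vec q → End' M₁} {a₂ : Vec q → End' M₂}
    (ha₁ : ContDiffOn ℝ (⊤ : ℕ∞) a₁ Ω) (ha₂ : ContDiffOn ℝ (⊤ : ℕ∞) a₂ Ω)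
    (hχ : ContDiffOn ℝ (⊤ : ℕ∞) χ Ω') (hχm : Set.MapsTo χ Ω' Ω)
    (hp2 : ∀ K : Set (Vec q), K ⊆ Ω → IsCompact K → ∀ α β : List (Fin q),
      ∃ C > 0, ∀ y ∈ K, ∀ η : Vec q,
        ‖(rpowEnd (jbr η) (a₂ y)).comp
            ((pdFst α (pdSnd β p) y η).comp (rpowEnd (jbr η) (-(a₁ y))))‖
          ≤ C * jbr η ^ (μ - (β.length : ℝ) + δ * (α.length : ℝ)))
    {K' : Set (Vec q)} (hK'sub : K' ⊆ Ω') (hK'c : IsCompact K')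
    {c : ℝ} (hc1 : 1 ≤ c)
    (hcb : ∀ y' ∈ K', ∀ η' : Vec q, ‖Af y' η'‖ ≤ c * ‖η'‖ ∧ ‖η'‖ ≤ c * ‖Af y' η'‖)
    {e : ℝ} {f : Vec q → Vec q → Hom' M₁ M₂} (hf : SymbRep Ω' χ Af p μ δ e f) :
    ∃ C > 0, ∀ y' ∈ K', ∀ η' : Vec q,
      ‖(rpowEnd (jbr η') (a₂ (χ y'))).comp
          ((f y' η').comp (rpowEnd (jbr η') (-(a₁ (χ y')))))‖ ≤ C * jbr η' ^ e := by
  have hc0 : (0:ℝ) < c := by linarith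
  have hKc : IsCompact (χ '' K') := hK'c.image_of_continuousOn (hχ.continuousOn.mono hK'sub)
  have hKsub : χ '' K' ⊆ Ω := by
    rintro - ⟨y', hy', rfl⟩
    exact hχm (hK'sub hy')
  obtain ⟨C₁, hC₁⟩ := hKc.exists_bound_of_continuousOn (ha₁.continuousOn.mono hKsub)
  obtain ⟨C₂, hC₂⟩ := hKc.exists_bound_of_continuousOn (ha₂.continuousOn.mono hKsub)
  have hjbr : ∀ y' ∈ K', ∀ η' : Vec q,
      jbr (Af y' η') ≤ c * jbr η' ∧ jbr η' ≤ c * jbr (Af y' η') := by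
    intro y' hy' η'
    exact ⟨jbr_le_jbr hc1 (hcb y' hy' η').1, jbr_le_jbr hc1 (hcb y' hy' η').2⟩
  set E₁ : ℝ := Real.exp (Real.log c * (max C₁ 0)) with hE₁def
  set E₂ : ℝ := Real.exp (Real.log c * (max C₂ 0)) with hE₂def
  have hE₁pos : 0 < E₁ := Real.exp_pos _
  have hE₂pos : 0 < E₂ := Real.exp_pos _
  have hlogc : 0 ≤ Real.log c := Real.log_nonneg hc1
  have htw : ∀ y' ∈ K', ∀ η' : Vec q,
      ‖(rpowEnd (jbr η') (a₂ (χ y'))).comp (rpowEnd (jbr (Af y' η')) (-(a₂ (χ y'))))‖ ≤ E₂ ∧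
      ‖(rpowEnd (jbr (Af y' η')) (a₁ (χ y'))).comp (rpowEnd (jbr η') (-(a₁ (χ y'))))‖ ≤ E₁ := by
    intro y' hy' η'
    have hmem : χ y' ∈ χ '' K' := ⟨y', hy', rfl⟩
    have hlog1 : |Real.log (jbr η') - Real.log (jbr (Af y' η'))| ≤ Real.log c :=
      abs_log_sub_log_le (jbr_pos _) (jbr_pos _) hc1 (hjbr y' hy' η').2 (hjbr y' hy' η').1
    have hlog2 : |Real.log (jbr (Af y' η')) - Real.log (jbr η')| ≤ Real.log c := by
      rw [abs_sub_comm]; exact hlog1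
    constructor
    · refine (norm_rpowEnd_comp_rpowEnd_neg_le _ _ _).trans (Real.exp_le_exp.2 ?_)
      exact mul_le_mul hlog1 (le_trans (hC₂ _ hmem) (le_max_left _ _)) (norm_nonneg _) hlogc
    · refine (norm_rpowEnd_comp_rpowEnd_neg_le _ _ _).trans (Real.exp_le_exp.2 ?_)
      exact mul_le_mul hlog2 (le_trans (hC₁ _ hmem) (le_max_left _ _)) (norm_nonneg _) hlogc
  induction hf with
  | base α β e he =>
    obtain ⟨Cp, hCp0, hCp⟩ := hp2 (χ '' K') hKsub hKc α β
    set e0 : ℝ := μ - (β.length : ℝ) + δ * (α.length : ℝ) with he0def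
    refine ⟨E₂ * Cp * c ^ |e0| * E₁, by positivity, ?_⟩
    intro y' hy' η'
    rw [sandwich (a₁ (χ y')) (a₂ (χ y')) (pdFst α (pdSnd β p) (χ y') (Af y' η'))
      (jbr η') (jbr (Af y' η'))]
    have h1 := (htw y' hy' η').1
    have h3 := (htw y' hy' η').2
    have hB := hCp (χ y') ⟨y', hy', rfl⟩ (Af y' η')
    have hjr := jbr_rpow_le hc1 (hjbr y' hy' η').1 (hjbr y' hy' η').2 e0
    have hmono := jbr_rpow_mono η' he
    have hBfull : ‖(rpowEnd (jbr (Af y' η')) (a₂ (χ y'))).comp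
        ((pdFst α (pdSnd β p) (χ y') (Af y' η')).comp
          (rpowEnd (jbr (Af y' η')) (-(a₁ (χ y')))))‖
        ≤ Cp * (c ^ |e0| * jbr η' ^ e) := by
      refine hB.trans ?_
      have k1 : jbr (Af y' η') ^ e0 ≤ c ^ |e0| * jbr η' ^ e0 := hjr
      have k2 : c ^ |e0| * jbr η' ^ e0 ≤ c ^ |e0| * jbr η' ^ e :=
        mul_le_mul_of_nonneg_left hmono (by positivity)
      exact mul_le_mul_of_nonneg_left (k1.trans k2) hCp0.le
    refine le_trans (ContinuousLinearMap.opNorm_comp_le _ _) ?_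
    refine le_trans (mul_le_mul le_rfl (ContinuousLinearMap.opNorm_comp_le _ _)
      (norm_nonneg _) (norm_nonneg _)) ?_
    have hprod : ‖(rpowEnd (jbr η') (a₂ (χ y'))).comp
          (rpowEnd (jbr (Af y' η')) (-(a₂ (χ y'))))‖ *
        (‖(rpowEnd (jbr (Af y' η')) (a₂ (χ y'))).comp
            ((pdFst α (pdSnd β p) (χ y') (Af y' η')).comp
              (rpowEnd (jbr (Af y' η')) (-(a₁ (χ y')))))‖ *
          ‖(rpowEnd (jbr (Af y' η')) (a₁ (χ y'))).comp
            (rpowEnd (jbr η') (-(a₁ (χ y'))))‖)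
        ≤ E₂ * ((Cp * (c ^ |e0| * jbr η' ^ e)) * E₁) := by
      refine mul_le_mul h1 (mul_le_mul hBfull h3 (norm_nonneg _) ?_) ?_ hE₂pos.le
      · have : (0:ℝ) ≤ jbr η' ^ e := Real.rpow_nonneg (jbr_pos η').le e
        positivity
      · positivity
    refine hprod.trans (le_of_eq ?_)
    ring
  | smul m hm hf ih =>
    obtain ⟨Cf, hCf0, hCf⟩ := ih
    obtain ⟨Cm, hCm⟩ := hK'c.exists_bound_of_continuousOn (hm.continuousOn.mono hK'sub)
    refine ⟨max Cm 1 * Cf, by positivity, fun y' hy' η' => ?_⟩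
    rw [smul_sandwich]
    refine le_trans (ContinuousLinearMap.opNorm_smul_le _ _) ?_
    have h1 : ‖m y'‖ ≤ max Cm 1 := (hCm y' hy').trans (le_max_left _ _)
    have h2 := hCf y' hy' η'
    refine le_trans (mul_le_mul h1 h2 (norm_nonneg _) (by positivity)) (le_of_eq (by ring))
  | lin L hL hf ih =>
    rename_i e' f'
    obtain ⟨Cf, hCf0, hCf⟩ := ih
    obtain ⟨CL, hCL⟩ := hK'c.exists_bound_of_continuousOn (hL.continuousOn.mono hK'sub)
    refine ⟨max CL 1 * Cf, by positivity, fun y' hy' η' => ?_⟩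
    rw [smul_sandwich]
    refine le_trans (ContinuousLinearMap.opNorm_smul_le _ _) ?_
    have h1 : ‖L y' η'‖ ≤ max CL 1 * jbr η' := by
      calc ‖L y' η'‖ ≤ ‖L y'‖ * ‖η'‖ := (L y').le_opNorm η'
      _ ≤ max CL 1 * jbr η' := by
          refine mul_le_mul (le_trans (hCL y' hy') (le_max_left _ _)) (norm_le_jbr η')
            (norm_nonneg _) ?_
          exact le_trans zero_le_one (le_max_right _ _)
    have h2 := hCf y' hy' η'
    calc ‖L y' η'‖ * ‖(rpowEnd (jbr η') (a₂ (χ y'))).comp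
          ((f' y' η').comp (rpowEnd (jbr η') (-(a₁ (χ y')))))‖
        ≤ (max CL 1 * jbr η') * (Cf * jbr η' ^ e') :=
          mul_le_mul h1 h2 (norm_nonneg _)
            (mul_nonneg (le_trans zero_le_one (le_max_right _ _)) (jbr_pos η').le)
      _ = max CL 1 * Cf * (jbr η' ^ e' * jbr η' ^ (1:ℝ)) := by
          rw [Real.rpow_one]; ring
      _ = max CL 1 * Cf * jbr η' ^ (e' + 1) := by
          rw [← Real.rpow_add (jbr_pos η')]
  | add hf hg ih1 ih2 =>
    obtain ⟨C1, hC10, hC1⟩ := ih1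
    obtain ⟨C2, hC20, hC2⟩ := ih2
    refine ⟨C1 + C2, by positivity, fun y' hy' η' => ?_⟩
    rw [add_sandwich]
    refine le_trans (norm_add_le _ _) ?_
    have := add_le_add (hC1 y' hy' η') (hC2 y' hy' η')
    refine this.trans (le_of_eq (by ring))
  | zero e =>
    refine ⟨1, one_pos, fun y' hy' η' => ?_⟩
    rw [zero_sandwich, norm_zero, one_mul]
    exact Real.rpow_nonneg (jbr_pos η').le e
  | mono hf h ih =>
    obtain ⟨C, hC0, hC⟩ := ih
    refine ⟨C, hC0, fun y' hy' η' => ?_⟩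
    refine (hC y' hy' η').trans ?_
    exact mul_le_mul_of_nonneg_left (jbr_rpow_mono η' h) hC0.le

end Estimates

section Closure

lemma diffAt_slice_fst {q : ℕ} {F : Type*} [NormedAddCommGroup F] [NormedSpace ℝ F]
    {f : Vec q → Vec q → F} {z : Vec q × Vec q}
    (h : DifferentiableAt ℝ (fun z : Vec q × Vec q => f z.1 z.2) z) :
    DifferentiableAt ℝ (fun y => f y z.2) z.1 :=
  (hasFDerivAt_slice_fst h).differentiableAt

lemma diffAt_slice_snd {q : ℕ} {F : Type*} [NormedAddCommGroup F] [NormedSpace ℝ F]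
    {f : Vec q → Vec q → F} {z : Vec q × Vec q}
    (h : DifferentiableAt ℝ (fun z : Vec q × Vec q => f z.1 z.2) z) :
    DifferentiableAt ℝ (f z.1) z.2 :=
  (hasFDerivAt_slice_snd h).differentiableAt

lemma pair_decomp {q : ℕ} (w : Vec q) :
    ((0 : Vec q), w) = ∑ j : Fin q, (w j) • (((0 : Vec q), sgl j) : Vec q × Vec q) := by
  have h0 := euclid_decomp w
  refine Prod.ext ?_ ?_
  · rw [Prod.fst_sum]
    simp
  · rw [Prod.snd_sum]
    simp only [Prod.smul_snd]
    exact h0.symm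

lemma pair_decomp' {q : ℕ} (u : Vec q) :
    ((u, (0 : Vec q)) : Vec q × Vec q) = ∑ j : Fin q, (u j) • ((sgl j, (0 : Vec q)) : Vec q × Vec q) := by
  have h0 := euclid_decomp u
  refine Prod.ext ?_ ?_
  · rw [Prod.fst_sum]
    simp only [Prod.smul_fst]
    exact h0.symm
  · rw [Prod.snd_sum]
    simp

variable {q M₁ M₂ : ℕ} {Ω Ω' : Set (Vec q)} {χ : Vec q → Vec q}
  {Af : Vec q → (Vec q →L[ℝ] Vec q)} {p : Vec q → Vec q → Hom' M₁ M₂} {μ δ : ℝ}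

set_option maxHeartbeats 1000000 in
lemma rep_D2 (hΩ : IsOpen Ω) (hΩ' : IsOpen Ω')
    (hp1 : ContDiffOn ℝ (⊤ : ℕ∞) (fun z : Vec q × Vec q => p z.1 z.2) (Ω ×ˢ (univ : Set (Vec q))))
    (hχ : ContDiffOn ℝ (⊤ : ℕ∞) χ Ω') (hχm : Set.MapsTo χ Ω' Ω)
    (hAf : ContDiffOn ℝ (⊤ : ℕ∞) Af Ω') (hδ : 0 ≤ δ) (k : Fin q)
    {e : ℝ} {f : Vec q → Vec q → Hom' M₁ M₂} (hf : SymbRep Ω' χ Af p μ δ e f) :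
    ∃ g, SymbRep Ω' χ Af p μ δ (e - 1) g ∧
      ∀ y' ∈ Ω', ∀ η' : Vec q, D2 k f y' η' = g y' η' := by
  have hUo : IsOpen (Ω ×ˢ (univ : Set (Vec q))) := hΩ.prod isOpen_univ
  have hU'o : IsOpen (Ω' ×ˢ (univ : Set (Vec q))) := hΩ'.prod isOpen_univ
  induction hf with
  | base α β e he =>
    refine ⟨fun y' η' => ∑ j : Fin q, ((Af y' (sgl k)) j) •
        pdFst α (pdSnd (j :: β) p) (χ y') (Af y' η'), ?_, ?_⟩
    · refine rep_sum Finset.univ _ (fun j _ => ?_)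
      refine SymbRep.smul _ ?_ (SymbRep.base α (j :: β) (e - 1) ?_)
      · exact (EuclideanSpace.proj j : Vec q →L[ℝ] ℝ).contDiff.comp_contDiffOn
          (hAf.clm_apply contDiffOn_const)
      · simp only [List.length_cons]
        push_cast
        linarith
    · intro y' hy' η'
      have hzU : ((χ y', Af y' η') : Vec q × Vec q) ∈ Ω ×ˢ (univ : Set (Vec q)) :=
        ⟨hχm hy', trivial⟩
      have hGsm := smoothU_pd hp1 hUo α β
      have hGd : DifferentiableAt ℝ
          (fun z : Vec q × Vec q => pdFst α (pdSnd β p) z.1 z.2) (χ y', Af y' η') :=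
        diffAt_of_smoothU hGsm hUo hzU
      have hh : HasFDerivAt (fun η : Vec q => ((χ y' : Vec q), Af y' η))
          ((0 : Vec q →L[ℝ] Vec q).prod (Af y')) η' :=
        (hasFDerivAt_const _ _).prodMk (Af y').hasFDerivAt
      have hcomp : HasFDerivAt (fun η : Vec q => pdFst α (pdSnd β p) (χ y') (Af y' η))
          ((fderiv ℝ (fun z : Vec q × Vec q => pdFst α (pdSnd β p) z.1 z.2)
              (χ y', Af y' η')).comp
            ((0 : Vec q →L[ℝ] Vec q).prod (Af y'))) η' := by have := hGd.hasFDerivAt.comp η' hh; exact this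
      show fderiv ℝ (fun η => pdFst α (pdSnd β p) (χ y') (Af y' η)) η' (sgl k) = _
      rw [hcomp.fderiv]
      have hstep : ((fderiv ℝ (fun z : Vec q × Vec q => pdFst α (pdSnd β p) z.1 z.2)
          (χ y', Af y' η')).comp
            ((0 : Vec q →L[ℝ] Vec q).prod (Af y'))) (sgl k) =
          (fderiv ℝ (fun z : Vec q × Vec q => pdFst α (pdSnd β p) z.1 z.2)
            (χ y', Af y' η')) (0, Af y' (sgl k)) := by
        simp
      rw [hstep, pair_decomp (Af y' (sgl k)), map_sum]
      refine Finset.sum_congr rfl (fun j _ => ?_)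
      rw [ContinuousLinearMap.map_smul]
      congr 1
      have h1 : D2 j (pdFst α (pdSnd β p)) (χ y') (Af y' η') =
          (fderiv ℝ (fun z : Vec q × Vec q => pdFst α (pdSnd β p) z.1 z.2)
            (χ y', Af y' η')) (0, sgl j) := pd2_eq hGd (sgl j)
      have h2 := pd_swap_cons hp1 hUo α β j (χ y') (Af y' η') hzU
      rw [← h2]
      exact h1.symm
  | smul m hm hf ih =>
    rename_i e' f'
    obtain ⟨g, hg, heq⟩ := ih
    refine ⟨fun y' η' => m y' • g y' η', SymbRep.smul m hm hg, ?_⟩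
    intro y' hy' η'
    have hsm := rep_smoothU hΩ hΩ' hp1 hχ hχm hAf hf
    have hfd : DifferentiableAt ℝ (f' y') η' :=
      diffAt_slice_snd (diffAt_of_smoothU hsm hU'o (⟨hy', trivial⟩ :
        ((y', η') : Vec q × Vec q) ∈ Ω' ×ˢ (univ : Set (Vec q))))
    show fderiv ℝ (fun η => m y' • f' y' η) η' (sgl k) = _
    rw [fderiv_fun_const_smul hfd (m y')]
    rw [ContinuousLinearMap.smul_apply]
    show m y' • D2 k f' y' η' = _
    rw [heq y' hy' η']
  | lin L hL hf ih =>
    rename_i e' f'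
    obtain ⟨g, hg, heq⟩ := ih
    refine ⟨fun y' η' => (L y' η') • g y' η' + (L y' (sgl k)) • f' y' η', ?_, ?_⟩
    · refine SymbRep.add ?_ ?_
      · exact (SymbRep.lin L hL hg).mono (by linarith)
      · exact (SymbRep.smul (fun y' => L y' (sgl k))
          (hL.clm_apply contDiffOn_const) hf).mono (by linarith)
    · intro y' hy' η'
      have hsm := rep_smoothU hΩ hΩ' hp1 hχ hχm hAf hf
      have hfd : DifferentiableAt ℝ (f' y') η' :=
        diffAt_slice_snd (diffAt_of_smoothU hsm hU'o (⟨hy', trivial⟩ :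
          ((y', η') : Vec q × Vec q) ∈ Ω' ×ˢ (univ : Set (Vec q))))
      have hc : HasFDerivAt (fun η : Vec q => L y' η) (L y') η' := (L y').hasFDerivAt
      have hder := hc.smul hfd.hasFDerivAt
      show fderiv ℝ (fun η => L y' η • f' y' η) η' (sgl k) = _
      rw [HasFDerivAt.fderiv (f := fun η => L y' η • f' y' η) hder]
      rw [ContinuousLinearMap.add_apply, ContinuousLinearMap.smul_apply,
        ContinuousLinearMap.smulRight_apply]
      show L y' η' • D2 k f' y' η' + _ = _
      rw [heq y' hy' η']
  | add hf hg ihf ihg =>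
    rename_i e' f₁ f₂
    obtain ⟨g₁, hg₁, heq₁⟩ := ihf
    obtain ⟨g₂, hg₂, heq₂⟩ := ihg
    refine ⟨fun y' η' => g₁ y' η' + g₂ y' η', SymbRep.add hg₁ hg₂, ?_⟩
    intro y' hy' η'
    have hsm₁ := rep_smoothU hΩ hΩ' hp1 hχ hχm hAf hf
    have hsm₂ := rep_smoothU hΩ hΩ' hp1 hχ hχm hAf hg
    have hzin : ((y', η') : Vec q × Vec q) ∈ Ω' ×ˢ (univ : Set (Vec q)) := ⟨hy', trivial⟩
    have hfd₁ : DifferentiableAt ℝ (f₁ y') η' :=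
      diffAt_slice_snd (diffAt_of_smoothU hsm₁ hU'o hzin)
    have hfd₂ : DifferentiableAt ℝ (f₂ y') η' :=
      diffAt_slice_snd (diffAt_of_smoothU hsm₂ hU'o hzin)
    show fderiv ℝ (fun η => f₁ y' η + f₂ y' η) η' (sgl k) = _
    rw [fderiv_fun_add hfd₁ hfd₂, ContinuousLinearMap.add_apply]
    show D2 k f₁ y' η' + D2 k f₂ y' η' = _
    rw [heq₁ y' hy' η', heq₂ y' hy' η']
  | zero e =>
    refine ⟨fun _ _ => 0, SymbRep.zero (e - 1), ?_⟩
    intro y' hy' η'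
    show fderiv ℝ (fun _ => (0 : Hom' M₁ M₂)) η' (sgl k) = 0
    rw [fderiv_fun_const]
    simp
  | mono hf h ih =>
    obtain ⟨g, hg, heq⟩ := ih
    exact ⟨g, hg.mono (by linarith), heq⟩

end Closure

section ClosureD1

variable {q M₁ M₂ : ℕ} {Ω Ω' : Set (Vec q)} {χ : Vec q → Vec q}
  {Af : Vec q → (Vec q →L[ℝ] Vec q)} {p : Vec q → Vec q → Hom' M₁ M₂} {μ δ : ℝ}

set_option maxHeartbeats 1600000 in
lemma rep_D1 (hΩ : IsOpen Ω) (hΩ' : IsOpen Ω')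
    (hp1 : ContDiffOn ℝ (⊤ : ℕ∞) (fun z : Vec q × Vec q => p z.1 z.2) (Ω ×ˢ (univ : Set (Vec q))))
    (hχ : ContDiffOn ℝ (⊤ : ℕ∞) χ Ω') (hχm : Set.MapsTo χ Ω' Ω)
    (hAf : ContDiffOn ℝ (⊤ : ℕ∞) Af Ω') (hδ : 0 ≤ δ) (i : Fin q)
    {e : ℝ} {f : Vec q → Vec q → Hom' M₁ M₂} (hf : SymbRep Ω' χ Af p μ δ e f) :
    ∃ g, SymbRep Ω' χ Af p μ δ (e + δ) g ∧
      ∀ y' ∈ Ω', ∀ η' : Vec q, D1 i f y' η' = g y' η' := by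
  have hUo : IsOpen (Ω ×ˢ (univ : Set (Vec q))) := hΩ.prod isOpen_univ
  have hU'o : IsOpen (Ω' ×ˢ (univ : Set (Vec q))) := hΩ'.prod isOpen_univ
  induction hf with
  | base α β e he =>
    refine ⟨(fun y' η' => (∑ j : Fin q, ((fderiv ℝ χ y' (sgl i)) j) •
        pdFst (j :: α) (pdSnd β p) (χ y') (Af y' η')) +
        (∑ j : Fin q, (((EuclideanSpace.proj j :
            Vec q →L[ℝ] ℝ).comp (fderiv ℝ Af y' (sgl i))) η') •
          pdFst α (pdSnd (j :: β) p) (χ y') (Af y' η'))), ?_, ?_⟩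
    · refine SymbRep.add ?_ ?_
      · refine rep_sum Finset.univ _ (fun j _ => ?_)
        refine SymbRep.smul _ ?_ (SymbRep.base (j :: α) β (e + δ) ?_)
        · refine (EuclideanSpace.proj j : Vec q →L[ℝ] ℝ).contDiff.comp_contDiffOn ?_
          exact (hχ.fderiv_of_isOpen hΩ' (by simp)).clm_apply contDiffOn_const
        · simp only [List.length_cons]
          push_cast
          linarith
      · refine rep_sum Finset.univ _ (fun j _ => ?_)
        have hL : ContDiffOn ℝ (⊤ : ℕ∞) (fun z => (EuclideanSpace.proj j :
            Vec q →L[ℝ] ℝ).comp (fderiv ℝ Af z (sgl i))) Ω' := by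
          have h1 : ContDiffOn ℝ (⊤ : ℕ∞) (fun z => fderiv ℝ Af z (sgl i)) Ω' :=
            (hAf.fderiv_of_isOpen hΩ' (by simp)).clm_apply contDiffOn_const
          exact (ContinuousLinearMap.compL ℝ (Vec q) (Vec q) ℝ
            (EuclideanSpace.proj j)).contDiff.comp_contDiffOn h1
        refine (SymbRep.lin _ hL (SymbRep.base α (j :: β) (e + δ - 1) ?_)).mono (by linarith)
        simp only [List.length_cons]
        push_cast
        linarith
    · intro y' hy' η'
      have hzU : ((χ y', Af y' η') : Vec q × Vec q) ∈ Ω ×ˢ (univ : Set (Vec q)) :=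
        ⟨hχm hy', trivial⟩
      have hGd : DifferentiableAt ℝ
          (fun z : Vec q × Vec q => pdFst α (pdSnd β p) z.1 z.2) (χ y', Af y' η') :=
        diffAt_of_smoothU (smoothU_pd hp1 hUo α β) hUo hzU
      have hχdiff : DifferentiableAt ℝ χ y' :=
        (hχ.differentiableOn (by simp)).differentiableAt (hΩ'.mem_nhds hy')
      have hAfdiff : DifferentiableAt ℝ Af y' :=
        (hAf.differentiableOn (by simp)).differentiableAt (hΩ'.mem_nhds hy')
      have hh : HasFDerivAt (fun y : Vec q => ((χ y : Vec q), Af y η'))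
          ((fderiv ℝ χ y').prod ((ContinuousLinearMap.apply ℝ (Vec q) η').comp
            (fderiv ℝ Af y'))) y' :=
        hχdiff.hasFDerivAt.prodMk
          (((ContinuousLinearMap.apply ℝ (Vec q) η').hasFDerivAt).comp y'
            hAfdiff.hasFDerivAt)
      have hcomp : HasFDerivAt (fun y : Vec q => pdFst α (pdSnd β p) (χ y) (Af y η'))
          ((fderiv ℝ (fun z : Vec q × Vec q => pdFst α (pdSnd β p) z.1 z.2)
              (χ y', Af y' η')).comp
            ((fderiv ℝ χ y').prod ((ContinuousLinearMap.apply ℝ (Vec q) η').comp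
              (fderiv ℝ Af y')))) y' := by have := hGd.hasFDerivAt.comp y' hh; exact this
      show fderiv ℝ (fun y => pdFst α (pdSnd β p) (χ y) (Af y η')) y' (sgl i) = _
      rw [hcomp.fderiv]
      set D := fderiv ℝ (fun z : Vec q × Vec q => pdFst α (pdSnd β p) z.1 z.2)
        (χ y', Af y' η') with hD
      set u : Vec q := fderiv ℝ χ y' (sgl i) with hu
      set v : Vec q := (fderiv ℝ Af y' (sgl i)) η' with hv
      have step1 : (D.comp ((fderiv ℝ χ y').prod
          ((ContinuousLinearMap.apply ℝ (Vec q) η').comp (fderiv ℝ Af y')))) (sgl i) =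
          D (u, v) := by
        simp [hu, hv]
      rw [step1]
      have step2 : ((u, v) : Vec q × Vec q) = (u, (0 : Vec q)) + ((0 : Vec q), v) := by
        simp
      rw [step2, map_add, pair_decomp' u, pair_decomp v, map_sum, map_sum]
      congr 1
      · refine Finset.sum_congr rfl (fun j _ => ?_)
        rw [ContinuousLinearMap.map_smul]
        congr 1
        have h1 : D1 j (pdFst α (pdSnd β p)) (χ y') (Af y' η') = D (sgl j, 0) :=
          pd1_eq hGd (sgl j)
        exact h1.symm
      · refine Finset.sum_congr rfl (fun j _ => ?_)
        rw [ContinuousLinearMap.map_smul]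
        have hcoef : v j = ((EuclideanSpace.proj j :
            Vec q →L[ℝ] ℝ).comp (fderiv ℝ Af y' (sgl i))) η' := by
          simp [hv]
        rw [← hcoef]
        congr 1
        have h1 : D2 j (pdFst α (pdSnd β p)) (χ y') (Af y' η') = D (0, sgl j) :=
          pd2_eq hGd (sgl j)
        have h2 := pd_swap_cons hp1 hUo α β j (χ y') (Af y' η') hzU
        rw [← h2]
        exact h1.symm
  | smul m hm hf ih =>
    rename_i e' f'
    obtain ⟨g, hg, heq⟩ := ih
    have hm' : ContDiffOn ℝ (⊤ : ℕ∞) (fun z => fderiv ℝ m z (sgl i)) Ω' :=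
      (hm.fderiv_of_isOpen hΩ' (by simp)).clm_apply contDiffOn_const
    refine ⟨fun y' η' => m y' • g y' η' + (fderiv ℝ m y' (sgl i)) • f' y' η', ?_, ?_⟩
    · exact SymbRep.add (SymbRep.smul m hm hg)
        ((SymbRep.smul _ hm' hf).mono (by linarith))
    · intro y' hy' η'
      have hsm := rep_smoothU hΩ hΩ' hp1 hχ hχm hAf hf
      have hfd : DifferentiableAt ℝ (fun y => f' y η') y' :=
        diffAt_slice_fst (diffAt_of_smoothU hsm hU'o (⟨hy', trivial⟩ :
          ((y', η') : Vec q × Vec q) ∈ Ω' ×ˢ (univ : Set (Vec q))))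
      have hmd : HasFDerivAt m (fderiv ℝ m y') y' :=
        ((hm.differentiableOn (by simp)).differentiableAt (hΩ'.mem_nhds hy')).hasFDerivAt
      have hder := hmd.smul hfd.hasFDerivAt
      show fderiv ℝ (fun y => m y • f' y η') y' (sgl i) = _
      rw [HasFDerivAt.fderiv (f := fun y => m y • f' y η') hder]
      rw [ContinuousLinearMap.add_apply, ContinuousLinearMap.smul_apply,
        ContinuousLinearMap.smulRight_apply]
      show m y' • D1 i f' y' η' + _ = _
      rw [heq y' hy' η']
  | lin L hL hf ih =>
    rename_i e' f'
    obtain ⟨g, hg, heq⟩ := ih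
    have hL' : ContDiffOn ℝ (⊤ : ℕ∞) (fun z => fderiv ℝ L z (sgl i)) Ω' :=
      (hL.fderiv_of_isOpen hΩ' (by simp)).clm_apply contDiffOn_const
    refine ⟨fun y' η' => (L y' η') • g y' η' + ((fderiv ℝ L y' (sgl i)) η') • f' y' η',
        ?_, ?_⟩
    · refine SymbRep.add ((SymbRep.lin L hL hg).mono (by linarith)) ?_
      exact (SymbRep.lin _ hL' hf).mono (by linarith)
    · intro y' hy' η'
      have hsm := rep_smoothU hΩ hΩ' hp1 hχ hχm hAf hf
      have hfd : DifferentiableAt ℝ (fun y => f' y η') y' :=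
        diffAt_slice_fst (diffAt_of_smoothU hsm hU'o (⟨hy', trivial⟩ :
          ((y', η') : Vec q × Vec q) ∈ Ω' ×ˢ (univ : Set (Vec q))))
      have hLd : HasFDerivAt L (fderiv ℝ L y') y' :=
        ((hL.differentiableOn (by simp)).differentiableAt (hΩ'.mem_nhds hy')).hasFDerivAt
      have hcd : HasFDerivAt (fun y => L y η')
          ((ContinuousLinearMap.apply ℝ ℝ η').comp (fderiv ℝ L y')) y' :=
        ((ContinuousLinearMap.apply ℝ ℝ η').hasFDerivAt).comp y' hLd
      have hder := hcd.smul hfd.hasFDerivAt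
      show fderiv ℝ (fun y => L y η' • f' y η') y' (sgl i) = _
      rw [HasFDerivAt.fderiv (f := fun y => L y η' • f' y η') hder]
      rw [ContinuousLinearMap.add_apply, ContinuousLinearMap.smul_apply,
        ContinuousLinearMap.smulRight_apply, ContinuousLinearMap.comp_apply,
        ContinuousLinearMap.apply_apply]
      show L y' η' • D1 i f' y' η' + _ = _
      rw [heq y' hy' η']
  | add hf hg ihf ihg =>
    rename_i e' f₁ f₂
    obtain ⟨g₁, hg₁, heq₁⟩ := ihf
    obtain ⟨g₂, hg₂, heq₂⟩ := ihg
    refine ⟨fun y' η' => g₁ y' η' + g₂ y' η', SymbRep.add hg₁ hg₂, ?_⟩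
    intro y' hy' η'
    have hsm₁ := rep_smoothU hΩ hΩ' hp1 hχ hχm hAf hf
    have hsm₂ := rep_smoothU hΩ hΩ' hp1 hχ hχm hAf hg
    have hzin : ((y', η') : Vec q × Vec q) ∈ Ω' ×ˢ (univ : Set (Vec q)) := ⟨hy', trivial⟩
    have hfd₁ : DifferentiableAt ℝ (fun y => f₁ y η') y' :=
      diffAt_slice_fst (diffAt_of_smoothU hsm₁ hU'o hzin)
    have hfd₂ : DifferentiableAt ℝ (fun y => f₂ y η') y' :=
      diffAt_slice_fst (diffAt_of_smoothU hsm₂ hU'o hzin)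
    show fderiv ℝ (fun y => f₁ y η' + f₂ y η') y' (sgl i) = _
    rw [fderiv_fun_add hfd₁ hfd₂, ContinuousLinearMap.add_apply]
    show D1 i f₁ y' η' + D1 i f₂ y' η' = _
    rw [heq₁ y' hy' η', heq₂ y' hy' η']
  | zero e =>
    refine ⟨fun _ _ => 0, SymbRep.zero (e + δ), ?_⟩
    intro y' hy' η'
    show fderiv ℝ (fun _ => (0 : Hom' M₁ M₂)) y' (sgl i) = 0
    rw [fderiv_fun_const]
    simp
  | mono hf h ih =>
    obtain ⟨g, hg, heq⟩ := ih
    exact ⟨g, hg.mono (by linarith), heq⟩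

end ClosureD1

section Assembly

variable {q M₁ M₂ : ℕ} {Ω Ω' : Set (Vec q)} {χ : Vec q → Vec q}
  {Af : Vec q → (Vec q →L[ℝ] Vec q)} {p : Vec q → Vec q → Hom' M₁ M₂} {μ δ : ℝ}

lemma rep_main (hΩ : IsOpen Ω) (hΩ' : IsOpen Ω')
    (hp1 : ContDiffOn ℝ (⊤ : ℕ∞) (fun z : Vec q × Vec q => p z.1 z.2) (Ω ×ˢ (univ : Set (Vec q))))
    (hχ : ContDiffOn ℝ (⊤ : ℕ∞) χ Ω') (hχm : Set.MapsTo χ Ω' Ω)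
    (hAf : ContDiffOn ℝ (⊤ : ℕ∞) Af Ω') (hδ : 0 ≤ δ) (α β : List (Fin q)) :
    ∃ g, SymbRep Ω' χ Af p μ δ (μ - (β.length : ℝ) + δ * (α.length : ℝ)) g ∧
      ∀ y' ∈ Ω', ∀ η' : Vec q,
        pdFst α (pdSnd β (fun y' η' => p (χ y') (Af y' η'))) y' η' = g y' η' := by
  have hU'o : IsOpen (Ω' ×ˢ (univ : Set (Vec q))) := hΩ'.prod isOpen_univ
  induction α with
  | nil =>
    induction β with
    | nil =>
      refine ⟨fun y' η' => p (χ y') (Af y' η'),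
        (SymbRep.base [] [] _ (by norm_num)), ?_⟩
      intro y' hy' η'
      rfl
    | cons k β ihβ =>
      obtain ⟨g, hg, heq⟩ := ihβ
      obtain ⟨g₂, hg₂, heq₂⟩ := rep_D2 hΩ hΩ' hp1 hχ hχm hAf hδ k hg
      refine ⟨g₂, hg₂.mono (le_of_eq (by push_cast; simp; ring)), ?_⟩
      intro y' hy' η'
      rw [pdFst_nil] at heq ⊢
      rw [pdSnd_cons]
      have h1 : ∀ y η : Vec q, (y, η) ∈ Ω' ×ˢ (univ : Set (Vec q)) →
          pdSnd β (fun y' η' => p (χ y') (Af y' η')) y η = g y η :=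
        fun y η hz => heq y hz.1 η
      rw [D2_congrU hU'o h1 k y' η' ⟨hy', trivial⟩]
      exact heq₂ y' hy' η'
  | cons i α ihα =>
    obtain ⟨g, hg, heq⟩ := ihα
    obtain ⟨g₂, hg₂, heq₂⟩ := rep_D1 hΩ hΩ' hp1 hχ hχm hAf hδ i hg
    refine ⟨g₂, hg₂.mono (le_of_eq (by push_cast; simp; ring)), ?_⟩
    intro y' hy' η'
    rw [pdFst_cons]
    have h1 : ∀ y η : Vec q, (y, η) ∈ Ω' ×ˢ (univ : Set (Vec q)) →
        pdFst α (pdSnd β (fun y' η' => p (χ y') (Af y' η'))) y η = g y η :=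
      fun y η hz => heq y hz.1 η
    rw [D1_congrU hU'o h1 i y' η' ⟨hy', trivial⟩]
    exact heq₂ y' hy' η'

end Assembly

/-- the pullback under a diffeomorphism of an elliptic twisted symbol is
an elliptic twisted symbol. -/
theorem statement15 {q M₁ M₂ : ℕ} (Ω Ω' : Set (Vec q)) (hΩ : IsOpen Ω) (hΩ' : IsOpen Ω')
    (δ : ℝ) (hδ : δ ∈ Set.Ioo (0:ℝ) 1)
    (χ ψ : Vec q → Vec q)
    (hχ : ContDiffOn ℝ (⊤ : ℕ∞) χ Ω') (hψ : ContDiffOn ℝ (⊤ : ℕ∞) ψ Ω)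
    (hχm : Set.MapsTo χ Ω' Ω) (hψm : Set.MapsTo ψ Ω Ω')
    (hlr : ∀ y' ∈ Ω', ψ (χ y') = y') (hrl : ∀ y ∈ Ω, χ (ψ y) = y)
    (a₁ : Vec q → End' M₁) (a₂ : Vec q → End' M₂)
    (ha₁ : ContDiffOn ℝ (⊤ : ℕ∞) a₁ Ω) (ha₂ : ContDiffOn ℝ (⊤ : ℕ∞) a₂ Ω)
    (had1 : AdmissibleDecomp Ω δ a₁) (had2 : AdmissibleDecomp Ω δ a₂)
    (had1' : AdmissibleDecomp Ω' δ (a₁ ∘ χ)) (had2' : AdmissibleDecomp Ω' δ (a₂ ∘ χ))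
    (μ : ℝ) (p : Vec q → Vec q → Hom' M₁ M₂)
    (hp : TwistedSymbol Ω δ μ a₁ a₂ p)
    (hell : IsElliptic Ω μ a₁ a₂ p) :
    TwistedSymbol Ω' δ μ (a₁ ∘ χ) (a₂ ∘ χ)
      (fun y' η' => p (χ y') (ContinuousLinearMap.adjoint (fderiv ℝ ψ (χ y')) η')) ∧
    IsElliptic Ω' μ (a₁ ∘ χ) (a₂ ∘ χ)
      (fun y' η' => p (χ y') (ContinuousLinearMap.adjoint (fderiv ℝ ψ (χ y')) η')) := by
  obtain ⟨hδ0, hδ1⟩ := hδ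
  obtain ⟨hp1, hp2⟩ := hp
  set Af : Vec q → (Vec q →L[ℝ] Vec q) :=
    fun y' => ContinuousLinearMap.adjoint (fderiv ℝ ψ (χ y')) with hAfdef
  set Bf : Vec q → (Vec q →L[ℝ] Vec q) :=
    fun y' => ContinuousLinearMap.adjoint (fderiv ℝ χ y') with hBfdef
  have hAf : ContDiffOn ℝ (⊤ : ℕ∞) Af Ω' := by
    have h1 : ContDiffOn ℝ (⊤ : ℕ∞) (fun y' => fderiv ℝ ψ (χ y')) Ω' :=
      (hψ.fderiv_of_isOpen hΩ (by simp)).comp hχ hχm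
    exact ((ContinuousLinearMap.adjoint :
      (Vec q →L[ℝ] Vec q) ≃ₗᵢ[ℝ] (Vec q →L[ℝ] Vec q)).contDiff).comp_contDiffOn h1
  have hBf : ContDiffOn ℝ (⊤ : ℕ∞) Bf Ω' := by
    have h1 : ContDiffOn ℝ (⊤ : ℕ∞) (fun y' => fderiv ℝ χ y') Ω' :=
      hχ.fderiv_of_isOpen hΩ' (by simp)
    exact ((ContinuousLinearMap.adjoint :
      (Vec q →L[ℝ] Vec q) ≃ₗᵢ[ℝ] (Vec q →L[ℝ] Vec q)).contDiff).comp_contDiffOn h1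
  have hBA : ∀ y' ∈ Ω', ∀ η' : Vec q, (Bf y') (Af y' η') = η' := by
    intro y' hy' η'
    have hχd : HasFDerivAt χ (fderiv ℝ χ y') y' :=
      ((hχ.differentiableOn (by simp)).differentiableAt (hΩ'.mem_nhds hy')).hasFDerivAt
    have hψd : HasFDerivAt ψ (fderiv ℝ ψ (χ y')) (χ y') :=
      ((hψ.differentiableOn (by simp)).differentiableAt (hΩ.mem_nhds (hχm hy'))).hasFDerivAt
    have hcomp : HasFDerivAt (ψ ∘ χ) ((fderiv ℝ ψ (χ y')).comp (fderiv ℝ χ y')) y' :=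
      hψd.comp y' hχd
    have hev : (ψ ∘ χ) =ᶠ[nhds y'] (id : Vec q → Vec q) :=
      Filter.eventuallyEq_of_mem (hΩ'.mem_nhds hy') (fun z hz => hlr z hz)
    have hid : HasFDerivAt (id : Vec q → Vec q)
        ((fderiv ℝ ψ (χ y')).comp (fderiv ℝ χ y')) y' :=
      hcomp.congr_of_eventuallyEq hev.symm
    have huniq : (fderiv ℝ ψ (χ y')).comp (fderiv ℝ χ y') = ContinuousLinearMap.id ℝ (Vec q) :=
      hid.unique (hasFDerivAt_id y')
    have hBAc : (Bf y').comp (Af y') = ContinuousLinearMap.id ℝ (Vec q) := by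
      rw [hBfdef, hAfdef]
      rw [← ContinuousLinearMap.adjoint_comp, huniq, ContinuousLinearMap.adjoint_id]
    have := ContinuousLinearMap.ext_iff.1 hBAc η'
    simpa using this
  have hbnd : ∀ K' : Set (Vec q), K' ⊆ Ω' → IsCompact K' → ∃ c : ℝ, 1 ≤ c ∧
      ∀ y' ∈ K', ∀ η' : Vec q, ‖Af y' η'‖ ≤ c * ‖η'‖ ∧ ‖η'‖ ≤ c * ‖Af y' η'‖ := by
    intro K' hsub hcompact
    obtain ⟨CA, hCA⟩ := hcompact.exists_bound_of_continuousOn (hAf.continuousOn.mono hsub)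
    obtain ⟨CB, hCB⟩ := hcompact.exists_bound_of_continuousOn (hBf.continuousOn.mono hsub)
    refine ⟨max (max CA CB) 1, le_max_right _ _, ?_⟩
    intro y' hy' η'
    constructor
    · calc ‖Af y' η'‖ ≤ ‖Af y'‖ * ‖η'‖ := (Af y').le_opNorm η'
      _ ≤ max (max CA CB) 1 * ‖η'‖ :=
          mul_le_mul_of_nonneg_right
            ((hCA y' hy').trans (le_trans (le_max_left _ _) (le_max_left _ _)))
            (norm_nonneg _)
    · calc ‖η'‖ = ‖(Bf y') (Af y' η')‖ := by rw [hBA y' (hsub hy') η']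
      _ ≤ ‖Bf y'‖ * ‖Af y' η'‖ := (Bf y').le_opNorm _
      _ ≤ max (max CA CB) 1 * ‖Af y' η'‖ :=
          mul_le_mul_of_nonneg_right
            ((hCB y' hy').trans (le_trans (le_max_right _ _) (le_max_left _ _)))
            (norm_nonneg _)
  constructor
  · constructor
    · exact rep_smoothU hΩ hΩ' hp1 hχ hχm hAf
        (SymbRep.base (Ω' := Ω') (μ := μ) (δ := δ) [] []
          (μ - (([] : List (Fin q)).length : ℝ) + δ * (([] : List (Fin q)).length : ℝ)) le_rfl)
    · intro K' hsub hcompact α β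
      obtain ⟨c, hc1, hcb⟩ := hbnd K' hsub hcompact
      obtain ⟨g, hg, heq⟩ := rep_main hΩ hΩ' hp1 hχ hχm hAf (le_of_lt hδ0) α β
      obtain ⟨C, hC0, hC⟩ := rep_estimate ha₁ ha₂ hχ hχm hp2 hsub hcompact hc1 hcb hg
      refine ⟨C, hC0, ?_⟩
      intro y' hy' η'
      have heq' := heq y' (hsub hy') η'
      simp only [Function.comp_apply]
      rw [heq']
      exact hC y' hy' η'
  · intro K' hsub hcompact
    obtain ⟨c, hc1, hcb⟩ := hbnd K' hsub hcompact
    have hc0 : (0:ℝ) < c := lt_of_lt_of_le one_pos hc1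
    have hKc : IsCompact (χ '' K') :=
      hcompact.image_of_continuousOn (hχ.continuousOn.mono hsub)
    have hKsub : χ '' K' ⊆ Ω := by
      rintro - ⟨y', hy', rfl⟩
      exact hχm (hsub hy')
    obtain ⟨R, hR0, C, hC0, pinv, hpinv⟩ := hell (χ '' K') hKsub hKc
    obtain ⟨C₁, hC₁⟩ := hKc.exists_bound_of_continuousOn (ha₁.continuousOn.mono hKsub)
    obtain ⟨C₂, hC₂⟩ := hKc.exists_bound_of_continuousOn (ha₂.continuousOn.mono hKsub)
    set E₁ : ℝ := Real.exp (Real.log c * max C₁ 0) with hE₁def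
    set E₂ : ℝ := Real.exp (Real.log c * max C₂ 0) with hE₂def
    have hE₁pos : 0 < E₁ := Real.exp_pos _
    have hE₂pos : 0 < E₂ := Real.exp_pos _
    have hlogc : 0 ≤ Real.log c := Real.log_nonneg hc1
    refine ⟨c * R, by positivity, E₁ * C * c ^ |(-μ)| * E₂, by positivity,
      fun y' η' => pinv (χ y') (Af y' η'), ?_⟩
    intro y' hy' η' hR'
    have hjbr1 : jbr (Af y' η') ≤ c * jbr η' := jbr_le_jbr hc1 (hcb y' hy' η').1
    have hjbr2 : jbr η' ≤ c * jbr (Af y' η') := jbr_le_jbr hc1 (hcb y' hy' η').2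
    have hAη : R ≤ ‖Af y' η'‖ :=
      (mul_le_mul_iff_right₀ hc0).mp (hR'.trans (hcb y' hy' η').2)
    obtain ⟨hinv1, hinv2, hnorm⟩ := hpinv (χ y') ⟨y', hy', rfl⟩ (Af y' η') hAη
    refine ⟨hinv1, hinv2, ?_⟩
    simp only [Function.comp_apply]
    rw [sandwich (a₂ (χ y')) (a₁ (χ y')) (pinv (χ y') (Af y' η')) (jbr η') (jbr (Af y' η'))]
    have hmem : χ y' ∈ χ '' K' := ⟨y', hy', rfl⟩
    have hlog1 : |Real.log (jbr η') - Real.log (jbr (Af y' η'))| ≤ Real.log c :=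
      abs_log_sub_log_le (jbr_pos _) (jbr_pos _) hc1 hjbr2 hjbr1
    have hlog2 : |Real.log (jbr (Af y' η')) - Real.log (jbr η')| ≤ Real.log c := by
      rw [abs_sub_comm]; exact hlog1
    have h1 : ‖(rpowEnd (jbr η') (a₁ (χ y'))).comp
        (rpowEnd (jbr (Af y' η')) (-(a₁ (χ y'))))‖ ≤ E₁ := by
      refine (norm_rpowEnd_comp_rpowEnd_neg_le _ _ _).trans (Real.exp_le_exp.2 ?_)
      exact mul_le_mul hlog1 (le_trans (hC₁ _ hmem) (le_max_left _ _)) (norm_nonneg _) hlogc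
    have h3 : ‖(rpowEnd (jbr (Af y' η')) (a₂ (χ y'))).comp
        (rpowEnd (jbr η') (-(a₂ (χ y'))))‖ ≤ E₂ := by
      refine (norm_rpowEnd_comp_rpowEnd_neg_le _ _ _).trans (Real.exp_le_exp.2 ?_)
      exact mul_le_mul hlog2 (le_trans (hC₂ _ hmem) (le_max_left _ _)) (norm_nonneg _) hlogc
    have hmid : ‖(rpowEnd (jbr (Af y' η')) (a₁ (χ y'))).comp
        ((pinv (χ y') (Af y' η')).comp (rpowEnd (jbr (Af y' η')) (-(a₂ (χ y')))))‖
        ≤ C * (c ^ |(-μ)| * jbr η' ^ (-μ)) := by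
      refine hnorm.trans ?_
      have := jbr_rpow_le hc1 hjbr1 hjbr2 (-μ)
      exact mul_le_mul_of_nonneg_left this hC0.le
    refine le_trans (ContinuousLinearMap.opNorm_comp_le _ _) ?_
    refine le_trans (mul_le_mul le_rfl (ContinuousLinearMap.opNorm_comp_le _ _)
      (norm_nonneg _) (norm_nonneg _)) ?_
    have htotal : ‖(rpowEnd (jbr η') (a₁ (χ y'))).comp
          (rpowEnd (jbr (Af y' η')) (-(a₁ (χ y'))))‖ *
        (‖(rpowEnd (jbr (Af y' η')) (a₁ (χ y'))).comp
            ((pinv (χ y') (Af y' η')).comp (rpowEnd (jbr (Af y' η')) (-(a₂ (χ y')))))‖ *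
          ‖(rpowEnd (jbr (Af y' η')) (a₂ (χ y'))).comp
            (rpowEnd (jbr η') (-(a₂ (χ y'))))‖)
        ≤ E₁ * ((C * (c ^ |(-μ)| * jbr η' ^ (-μ))) * E₂) := by
      refine mul_le_mul h1 (mul_le_mul hmid h3 (norm_nonneg _) ?_) ?_ hE₁pos.le
      · have : (0:ℝ) ≤ jbr η' ^ (-μ) := Real.rpow_nonneg (jbr_pos η').le (-μ)
        positivity
      · positivity
    refine htotal.trans (le_of_eq ?_)
    ring
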